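/- (Castaing) Let (Ω,𝓕) be a measurable space and E a Polish space. A closed-valued, nonempty-valued map S : Ω ⇉ E is Effros measurable if and only if there exists a countable family of Borel measurable functions x_n : Ω → E such that S(ω) = cl{x_n(ω) : n ∈ ℕ} for each ω ∈ Ω. -/

import Mathlib

open Set

namespace RandomSetPaper

/-- Effros measurability of a set-valued mapping `S : Ω ⇉ E`:
`{ω | S ω ∩ O ≠ ∅}` is measurable for every open `O ⊆ E`. -/
def EffrosMeasurable {Ω E : Type*} [MeasurableSpace Ω] [TopologicalSpace E]
    (S : Ω → Set E) : Prop :=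
  ∀ O : Set E, IsOpen O → MeasurableSet {ω | (S ω ∩ O).Nonempty}

/-! The selections are built as in the Kuratowski–Ryll-Nardzewski theorem: along a dense
sequence `d`, choose measurably (always the least admissible index) points `d (g n ω)` within
`ε / 2 ^ n` of `S ω`, each close to the previous one. This Cauchy sequence converges to a point
of the closed set `S ω` that stays within `3 ε` of the starting point, and the limit is measurable.
Starting, where possible, at `d k` at scale `ε`, for all `k` and all `ε = 1 / (m + 1)`, gives
a countable family of selections which is dense in every `S ω`. -/

open Metric Filter Topology TopologicalSpace

lemma measurableSet_setOf_apply_of_countable {Ω ι : Type*} [MeasurableSpace Ω] [Countable ι]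
    [MeasurableSpace ι] [MeasurableSingletonClass ι] {P : ι → Ω → Prop}
    (hP : ∀ i, MeasurableSet {ω | P i ω}) {g : Ω → ι} (hg : Measurable g) :
    MeasurableSet {ω | P (g ω) ω} := by
  have hP' : Measurable fun p : Ω × ι => P p.2 p.1 :=
    measurable_from_prod_countable_left fun n => measurableSet_setOfPred.1 (hP n)
  exact measurableSet_setOfPred.2 (hP'.comp (measurable_id.prodMk hg))

lemma _root_.IsClosed.mem_of_tendsto_of_inter_ball_nonempty {E : Type*} [PseudoMetricSpace E]
    {s : Set E} (hs : IsClosed s) {y : ℕ → E} {a : E} (hy : Tendsto y atTop (𝓝 a)) {r : ℕ → ℝ}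
    (hr : Tendsto r atTop (𝓝 0)) (hys : ∀ n, (s ∩ ball (y n) (r n)).Nonempty) : a ∈ s := by
  choose z hzs hz using hys
  refine hs.mem_of_tendsto (tendsto_of_tendsto_of_dist hy ?_) (Eventually.of_forall hzs)
  exact squeeze_zero (fun _ => dist_nonneg) (fun n => (mem_ball'.1 (hz n)).le) hr

namespace EffrosMeasurable

variable {Ω E : Type*} [MeasurableSpace Ω] [PseudoMetricSpace E] {S : Ω → Set E} {d : ℕ → E}

lemma exists_measurable_index_refine (hS : EffrosMeasurable S) (hd : DenseRange d)
    {g : Ω → ℕ} (hg : Measurable g) {r r' : ℝ} (hr' : 0 < r')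
    (hgS : ∀ ω, (S ω ∩ ball (d (g ω)) r).Nonempty) :
    ∃ g' : Ω → ℕ, Measurable g' ∧
      ∀ ω, (S ω ∩ ball (d (g' ω)) r' ∩ ball (d (g ω)) r).Nonempty := by
  classical
  have hex : ∀ ω, ∃ i, (S ω ∩ ball (d i) r' ∩ ball (d (g ω)) r).Nonempty := fun ω => by
    obtain ⟨s, hsS, hs⟩ := hgS ω
    obtain ⟨i, hi⟩ := hd.exists_dist_lt s hr'
    exact ⟨i, s, ⟨hsS, mem_ball.2 hi⟩, hs⟩
  refine ⟨fun ω => Nat.find (hex ω), measurable_find hex fun i => ?_,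
    fun ω => Nat.find_spec (hex ω)⟩
  refine measurableSet_setOf_apply_of_countable
    (P := fun a ω => (S ω ∩ ball (d i) r' ∩ ball (d a) r).Nonempty) (fun a => ?_) hg
  simpa only [inter_assoc] using hS _ (isOpen_ball.inter isOpen_ball)

lemma exists_measurable_index_seq (hS : EffrosMeasurable S) (hd : DenseRange d)
    {g₀ : Ω → ℕ} (hg₀ : Measurable g₀) {r : ℕ → ℝ} (hr : ∀ n, 0 < r n)
    (hg₀S : ∀ ω, (S ω ∩ ball (d (g₀ ω)) (r 0)).Nonempty) :
    ∃ g : ℕ → Ω → ℕ, g 0 = g₀ ∧ (∀ n, Measurable (g n)) ∧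
      ∀ n ω,
        (S ω ∩ ball (d (g (n + 1) ω)) (r (n + 1)) ∩ ball (d (g n ω)) (r n)).Nonempty := by
  choose! step hstep_meas hstep using
    fun n (g : Ω → ℕ) (hg : Measurable g)
        (hgS : ∀ ω, (S ω ∩ ball (d (g ω)) (r n)).Nonempty) =>
      hS.exists_measurable_index_refine hd hg (hr (n + 1)) hgS
  let g : ℕ → Ω → ℕ := fun n => Nat.rec g₀ step n
  have hg : ∀ n, Measurable (g n) ∧ ∀ ω, (S ω ∩ ball (d (g n ω)) (r n)).Nonempty := by
    intro n
    induction n with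
    | zero => exact ⟨hg₀, hg₀S⟩
    | succ n ih =>
      exact ⟨hstep_meas n _ ih.1 ih.2,
        fun ω => (hstep n _ ih.1 ih.2 ω).mono inter_subset_left⟩
  exact ⟨g, rfl, fun n => (hg n).1, fun n => hstep n _ (hg n).1 (hg n).2⟩

lemma exists_measurable_selection_near [CompleteSpace E] [MeasurableSpace E] [BorelSpace E]
    (hS : EffrosMeasurable S) (hclosed : ∀ ω, IsClosed (S ω)) (hd : DenseRange d)
    {g₀ : Ω → ℕ} (hg₀ : Measurable g₀) {ε : ℝ} (hε : 0 < ε)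
    (hg₀S : ∀ ω, (S ω ∩ ball (d (g₀ ω)) ε).Nonempty) :
    ∃ f : Ω → E, Measurable f ∧ ∀ ω, f ω ∈ S ω ∧ dist (d (g₀ ω)) (f ω) ≤ 3 * ε := by
  set r : ℕ → ℝ := fun n => ε / 2 ^ n
  obtain ⟨g, rfl, hg, hgS⟩ := hS.exists_measurable_index_seq hd hg₀ (r := r)
    (fun n => by positivity) (by simpa [r] using hg₀S)
  have hstep : ∀ ω n, dist (d (g n ω)) (d (g (n + 1) ω)) ≤ 3 * ε / 2 / 2 ^ n := by
    intro ω n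
    obtain ⟨z, ⟨-, hz₁⟩, hz₀⟩ := hgS n ω
    calc dist (d (g n ω)) (d (g (n + 1) ω))
        ≤ dist (d (g n ω)) z + dist (d (g (n + 1) ω)) z := dist_triangle_right _ _ _
      _ ≤ r n + r (n + 1) := add_le_add (mem_ball'.1 hz₀).le (mem_ball'.1 hz₁).le
      _ = 3 * ε / 2 / 2 ^ n := by simp only [r, pow_succ]; field_simp; ring
  choose f hf using fun ω =>
    cauchySeq_tendsto_of_complete (cauchySeq_of_le_geometric_two (hstep ω))
  have hr : Tendsto r atTop (𝓝 0) := by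
    simpa [r, div_eq_mul_inv, ← inv_pow] using
      (tendsto_pow_atTop_nhds_zero_of_lt_one (by norm_num)
        (by norm_num : (2 : ℝ)⁻¹ < 1)).const_mul ε
  have hfm : Measurable f := measurable_of_tendsto_metrizable
    (fun n => measurable_from_nat.comp (hg n)) (tendsto_pi_nhds.2 hf)
  refine ⟨f, hfm, fun ω => ⟨?_, dist_le_of_le_geometric_two_of_tendsto₀ (hstep ω) (hf ω)⟩⟩
  exact (hclosed ω).mem_of_tendsto_of_inter_ball_nonempty (hf ω) hr
    fun n => (hgS n ω).mono fun z hz => ⟨hz.1.1, hz.2⟩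

lemma exists_measurable_selection_anchored [CompleteSpace E] [MeasurableSpace E]
    [BorelSpace E] (hS : EffrosMeasurable S) (hclosed : ∀ ω, IsClosed (S ω))
    (hne : ∀ ω, (S ω).Nonempty) (hd : DenseRange d) (k : ℕ) {ε : ℝ} (hε : 0 < ε) :
    ∃ f : Ω → E, Measurable f ∧ (∀ ω, f ω ∈ S ω) ∧
      ∀ ω, (S ω ∩ ball (d k) ε).Nonempty → dist (d k) (f ω) ≤ 3 * ε := by
  classical
  have hex : ∀ ω, ∃ j, (S ω ∩ ball (d j) ε).Nonempty := fun ω => by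
    obtain ⟨s, hs⟩ := hne ω
    obtain ⟨j, hj⟩ := hd.exists_dist_lt s hε
    exact ⟨j, s, hs, mem_ball.2 hj⟩
  let g₀ : Ω → ℕ := fun ω => if (S ω ∩ ball (d k) ε).Nonempty then k else Nat.find (hex ω)
  have hg₀ : Measurable g₀ := Measurable.ite (hS _ isOpen_ball) measurable_const
    (measurable_find hex fun _ => hS _ isOpen_ball)
  have hg₀S : ∀ ω, (S ω ∩ ball (d (g₀ ω)) ε).Nonempty := fun ω => by
    by_cases h : (S ω ∩ ball (d k) ε).Nonempty
    · simpa only [g₀, if_pos h] using h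
    · simpa only [g₀, if_neg h] using Nat.find_spec (hex ω)
  obtain ⟨f, hf, hfS⟩ := hS.exists_measurable_selection_near hclosed hd hg₀ hε hg₀S
  refine ⟨f, hf, fun ω => (hfS ω).1, fun ω h => ?_⟩
  simpa only [g₀, if_pos h] using (hfS ω).2

lemma exists_measurable_seq_eq_closure [SeparableSpace E] [CompleteSpace E] [MeasurableSpace E]
    [BorelSpace E] (hS : EffrosMeasurable S) (hclosed : ∀ ω, IsClosed (S ω))
    (hne : ∀ ω, (S ω).Nonempty) :
    ∃ x : ℕ → Ω → E, (∀ n, Measurable (x n)) ∧ ∀ ω, S ω = closure {e | ∃ n, e = x n ω} := by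
  rcases isEmpty_or_nonempty E with hE | hE
  · have : IsEmpty Ω := ⟨fun ω => (hne ω).ne_empty (Subsingleton.elim _ _)⟩
    exact ⟨fun _ => isEmptyElim, fun _ => measurable_of_empty _, isEmptyElim⟩
  obtain ⟨d, hd⟩ := exists_dense_seq E
  choose f hfm hfS hfd using fun p : ℕ × ℕ =>
    hS.exists_measurable_selection_anchored hclosed hne hd p.1 (ε := 1 / (p.2 + 1))
      (by positivity)
  refine ⟨fun n => f n.unpair, fun n => hfm _, fun ω => ?_⟩
  refine (closure_minimal (by rintro _ ⟨n, rfl⟩; exact hfS _ ω) (hclosed ω)).antisymm' ?_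
  intro s hs
  rw [Metric.mem_closure_iff]
  intro δ hδ
  obtain ⟨m, hm⟩ := exists_nat_one_div_lt (by positivity : 0 < δ / 4)
  obtain ⟨j, hj⟩ := hd.exists_dist_lt s (by positivity : (0 : ℝ) < 1 / (m + 1))
  have hfj := hfd (j, m) ω ⟨s, hs, mem_ball.2 hj⟩
  refine ⟨f (j, m) ω, ⟨Nat.pair j m, by simp⟩, ?_⟩
  calc dist s (f (j, m) ω) ≤ dist s (d j) + dist (d j) (f (j, m) ω) := dist_triangle _ _ _
    _ < 4 * (1 / (m + 1)) := by dsimp only at hfj; linarith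
    _ < δ := by linarith

end EffrosMeasurable

lemma effrosMeasurable_of_forall_eq_closure {Ω E : Type*} [MeasurableSpace Ω]
    [TopologicalSpace E] [MeasurableSpace E] [OpensMeasurableSpace E] {S : Ω → Set E}
    {x : ℕ → Ω → E} (hx : ∀ n, Measurable (x n))
    (hS : ∀ ω, S ω = closure {e | ∃ n, e = x n ω}) : EffrosMeasurable S := by
  intro O hO
  have hpre : {ω | (S ω ∩ O).Nonempty} = ⋃ n, x n ⁻¹' O := by
    ext ω
    rw [mem_ofPred_eq, hS ω, closure_inter_open_nonempty_iff hO]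
    simp [Set.Nonempty]
  exact hpre ▸ MeasurableSet.iUnion fun n => hx n hO.measurableSet

/-- **Castaing's theorem.** For a measurable space `(Ω, 𝓕)` and a Polish space `E`, a
closed-valued, nonempty-valued map `S : Ω ⇉ E` is Effros measurable if and only if there
is a countable family of Borel functions `xₙ : Ω → E` with
`S ω = cl {xₙ ω : n ∈ ℕ}` for every `ω`. -/
theorem castaing {Ω E : Type*} [MeasurableSpace Ω]
    [MetricSpace E] [TopologicalSpace.SeparableSpace E] [CompleteSpace E]
    [MeasurableSpace E] [BorelSpace E]
    (S : Ω → Set E) (hclosed : ∀ ω, IsClosed (S ω)) (hne : ∀ ω, (S ω).Nonempty) :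
    EffrosMeasurable S ↔
      ∃ x : ℕ → Ω → E, (∀ n, Measurable (x n)) ∧
        ∀ ω, S ω = closure {e | ∃ n, e = x n ω} :=
  ⟨fun hS => hS.exists_measurable_seq_eq_closure hclosed hne,
    fun ⟨_, hx, hxS⟩ => effrosMeasurable_of_forall_eq_closure hx hxS⟩

end RandomSetPaper
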